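/- For every real x > 0 and every real v > −1/2, the modified Bessel function of the first kind satisfies I_v(x) < (cosh x / Γ(v+1)) · (x/2)^v. -/
import Mathlib


/-- The modified Bessel function of the first kind of real order `v`. -/
noncomputable def besselI (v x : ℝ) : ℝ :=
  ∑' m : ℕ, (1 / ((m.factorial : ℝ) * Real.Gamma ((m : ℝ) + v + 1))) *
    (x / 2) ^ (2 * (m : ℝ) + v)

lemma gamma_shift_pos (v : ℝ) (hv : -(1 / 2) < v) (m : ℕ) :
    0 < Real.Gamma ((m : ℝ) + v + 1) := by
  apply Real.Gamma_pos_of_pos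
  have : (0:ℝ) ≤ m := Nat.cast_nonneg m
  linarith

lemma key_ineq (v : ℝ) (hv : -(1 / 2) < v) (m : ℕ) :
    ((2 * m).factorial : ℝ) * Real.Gamma (v + 1) ≤
      4 ^ m * m.factorial * Real.Gamma ((m : ℝ) + v + 1) := by
  induction m with
  | zero => simp
  | succ n ih =>
    have hg : Real.Gamma (((n : ℝ) + v + 1) + 1) = ((n : ℝ) + v + 1) *
        Real.Gamma ((n : ℝ) + v + 1) := by
      apply Real.Gamma_add_one
      have : (0:ℝ) ≤ n := Nat.cast_nonneg n
      intro h; linarith [h]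
    have hcast : ((n : ℕ) + 1 : ℕ) = n + 1 := rfl
    have hGpos := gamma_shift_pos v hv n
    have hGvpos : 0 < Real.Gamma (v + 1) := Real.Gamma_pos_of_pos (by linarith)
    have h1 : (2 * (n + 1)).factorial = (2 * n + 2) * ((2 * n + 1) * (2 * n).factorial) := by
      have : 2 * (n + 1) = (2 * n + 1) + 1 := by ring
      rw [this, Nat.factorial_succ, Nat.factorial_succ]
    push_cast [h1, Nat.factorial_succ]
    have hstep : ((2:ℝ) * n + 2) * (2 * n + 1) ≤ 4 * (n + 1) * ((n : ℝ) + v + 1) := by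
      have hn : (0:ℝ) ≤ n := Nat.cast_nonneg n
      nlinarith
    have hexp : Real.Gamma ((n : ℝ) + 1 + v + 1) = ((n : ℝ) + v + 1) *
        Real.Gamma ((n : ℝ) + v + 1) := by
      rw [show (n : ℝ) + 1 + v + 1 = ((n : ℝ) + v + 1) + 1 by ring, hg]
    rw [hexp]
    have hn : (0:ℝ) ≤ n := Nat.cast_nonneg n
    have hfac : (0:ℝ) ≤ (2 * n).factorial := Nat.cast_nonneg _
    have hfac2 : (0:ℝ) ≤ n.factorial := Nat.cast_nonneg _
    have h4 : (0:ℝ) < 4 ^ n := by positivity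
    calc (2 * (n:ℝ) + 2) * ((2 * n + 1) * (2 * n).factorial) * Real.Gamma (v + 1)
        = ((2 * n).factorial * Real.Gamma (v + 1)) * ((2 * n + 2) * (2 * n + 1)) := by ring
      _ ≤ (4 ^ n * n.factorial * Real.Gamma ((n : ℝ) + v + 1)) * ((2 * n + 2) * (2 * n + 1)) := by
          apply mul_le_mul_of_nonneg_right ih; positivity
      _ ≤ (4 ^ n * n.factorial * Real.Gamma ((n : ℝ) + v + 1)) * (4 * (n + 1) * ((n : ℝ) + v + 1)) := by
          apply mul_le_mul_of_nonneg_left hstep; positivity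
      _ = 4 ^ (n + 1) * (((n:ℝ) + 1) * n.factorial) * (((n:ℝ) + v + 1) * Real.Gamma ((n : ℝ) + v + 1)) := by
          rw [pow_succ]; ring

theorem besselI_lt_cosh_bound (x v : ℝ) (hx : 0 < x) (hv : -(1 / 2) < v) :
    besselI v x < (Real.cosh x / Real.Gamma (v + 1)) * (x / 2) ^ v := by
  have hx2 : 0 < x / 2 := by linarith
  have hGvpos : 0 < Real.Gamma (v + 1) := Real.Gamma_pos_of_pos (by linarith)
  set f : ℕ → ℝ := fun m => (1 / ((m.factorial : ℝ) * Real.Gamma ((m : ℝ) + v + 1))) *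
    (x / 2) ^ (2 * (m : ℝ) + v) with hf
  set g : ℕ → ℝ := fun m => x ^ (2 * m) / ((2 * m).factorial : ℝ) *
    ((x / 2) ^ v / Real.Gamma (v + 1)) with hg
  have hgsum : HasSum g (Real.cosh x * ((x / 2) ^ v / Real.Gamma (v + 1))) :=
    (Real.hasSum_cosh x).mul_right _
  have hfe : ∀ m : ℕ, f m = (x / 2) ^ (2 * m) /
      ((m.factorial : ℝ) * Real.Gamma ((m : ℝ) + v + 1)) * (x / 2) ^ v := by
    intro m
    have : (x / 2 : ℝ) ^ (2 * (m : ℝ) + v) = (x / 2) ^ (2 * m : ℕ) * (x / 2) ^ v := by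
      rw [Real.rpow_add hx2, ← Real.rpow_natCast (x / 2) (2 * m)]
      push_cast; ring_nf
    simp only [hf, this]; ring
  have hge : ∀ m : ℕ, g m = x ^ (2 * m) / ((2 * m).factorial * Real.Gamma (v + 1)) *
      (x / 2) ^ v := by
    intro m; simp only [hg]; ring
  have hxv : (0:ℝ) < (x / 2) ^ v := Real.rpow_pos_of_pos hx2 v
  have hle : ∀ m : ℕ, f m ≤ g m := by
    intro m
    rw [hfe, hge]
    have hGpos := gamma_shift_pos v hv m
    have hfpos : (0:ℝ) < m.factorial := by exact_mod_cast m.factorial_pos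
    have hx2m : (x / 2 : ℝ) ^ (2 * m) = x ^ (2 * m) / 4 ^ m := by
      rw [div_pow]; congr 1; rw [pow_mul]; norm_num
    rw [hx2m, div_div]
    apply mul_le_mul_of_nonneg_right _ hxv.le
    apply div_le_div_of_nonneg_left (by positivity) (by positivity)
    calc ((2 * m).factorial : ℝ) * Real.Gamma (v + 1)
        ≤ 4 ^ m * m.factorial * Real.Gamma ((m : ℝ) + v + 1) := key_ineq v hv m
      _ = 4 ^ m * (m.factorial * Real.Gamma ((m : ℝ) + v + 1)) := by ring
  have hlt : f 1 < g 1 := by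
    rw [hfe, hge]
    apply mul_lt_mul_of_pos_right _ hxv
    have hG2 : Real.Gamma ((1 : ℕ) + v + 1 : ℝ) = (v + 1) * Real.Gamma (v + 1) := by
      push_cast
      rw [show (1 : ℝ) + v + 1 = (v + 1) + 1 by ring, Real.Gamma_add_one (by linarith)]
    have hx2m : (x / 2 : ℝ) ^ (2 * 1) = x ^ (2 * 1) / 4 := by
      rw [div_pow]; norm_num
    rw [hx2m, div_div, hG2]
    apply div_lt_div_of_pos_left (by positivity) (by positivity)
    simp only [Nat.factorial]
    push_cast
    nlinarith
  have h0 : ∀ m : ℕ, 0 ≤ f m := by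
    intro m
    rw [hfe]
    have hGpos := gamma_shift_pos v hv m
    positivity
  have := Summable.tsum_lt_tsum_of_nonneg h0 hle hlt hgsum.summable
  rw [hgsum.tsum_eq] at this
  calc besselI v x = ∑' m, f m := rfl
    _ < Real.cosh x * ((x / 2) ^ v / Real.Gamma (v + 1)) := this
    _ = (Real.cosh x / Real.Gamma (v + 1)) * (x / 2) ^ v := by ring
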